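/- Let S, T be marked quantales and f: S → T a closure preserving posemigroup morphism. If f(D)↓ has a join-relevant structure in the sense that f(D) is an admissible subset of T, then ⋁ f((D↓)̄) = ⋁ ((f(D)↓)̄). -/

import Mathlib

open Pointwise

/-- The closure `D̄` of a subset of a posemigroup, with `b, c` ranging over `S¹`
(the four cases correspond to `b = c = 1`, `c = 1`, `b = 1`, and `b, c ∈ S`). -/
def pcl (S : Type*) [Semigroup S] [PartialOrder S] (D : Set S) : Set S :=
  {x | ∀ a : S,
    ((∀ d ∈ D, d ≤ a) → x ≤ a) ∧
    (∀ b : S, (∀ d ∈ D, b * d ≤ a) → b * x ≤ a) ∧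
    (∀ c : S, (∀ d ∈ D, d * c ≤ a) → x * c ≤ a) ∧
    (∀ b c : S, (∀ d ∈ D, b * d * c ≤ a) → b * x * c ≤ a)}

/-- A marked quantale structure on a posemigroup `S`: a marking (set of admissible
subsets) containing singletons and closed under translations by elements of `S¹`,
such that every admissible set has a join over which multiplication distributes. -/
structure MarkedQuantale (S : Type*) [Semigroup S] [PartialOrder S] : Type _ where
  mark : Set (Set S)
  singleton_mem : ∀ a : S, {a} ∈ mark
  mul_left_mem : ∀ G ∈ mark, ∀ a : S, (a * ·) '' G ∈ mark
  mul_right_mem : ∀ G ∈ mark, ∀ b : S, (· * b) '' G ∈ mark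
  mul_both_mem : ∀ G ∈ mark, ∀ a b : S, (fun x => a * x * b) '' G ∈ mark
  exists_lub : ∀ M ∈ mark, ∃ m : S, IsLUB M m
  lub_mul_left : ∀ M ∈ mark, ∀ m : S, IsLUB M m → ∀ a : S, IsLUB ((a * ·) '' M) (a * m)
  lub_mul_right : ∀ M ∈ mark, ∀ m : S, IsLUB M m → ∀ b : S, IsLUB ((· * b) '' M) (m * b)
  lub_mul_both : ∀ M ∈ mark, ∀ m : S, IsLUB M m → ∀ a b : S,
    IsLUB ((fun x => a * x * b) '' M) (a * m * b)

/-- `D` is an `A`-ideal: a lower set closed under joins of its admissible subsets. -/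
def IsAIdeal {S : Type*} [Semigroup S] [PartialOrder S] (A : Set (Set S)) (D : Set S) : Prop :=
  IsLowerSet D ∧ ∀ M ∈ A, M ⊆ D → ∀ m : S, IsLUB M m → m ∈ D

/- `f(D) ⊆ f((D↓)̄) ⊆ (f(D)↓)̄`, the second inclusion being closure preservation,
and passing from `E` to `(E↓)̄` does not change the set of upper bounds. Hence all
three sets have the same upper bounds, and the join of the admissible set `f(D)` is
the join of the other two. -/

section Closure

variable {S : Type*} [Semigroup S] [PartialOrder S]

theorem subset_pcl (D : Set S) : D ⊆ pcl S D :=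
  fun x hx _ => ⟨fun h => h x hx, fun _ h => h x hx, fun _ h => h x hx, fun _ _ h => h x hx⟩

theorem upperBounds_pcl (D : Set S) : upperBounds (pcl S D) = upperBounds D :=
  (upperBounds_mono_set (subset_pcl D)).antisymm fun a ha _ hx => (hx a).1 fun _ hd => ha hd

theorem subset_pcl_lowerClosure (E : Set S) : E ⊆ pcl S (lowerClosure E) :=
  subset_lowerClosure.trans (subset_pcl _)

theorem isLUB_pcl_lowerClosure_iff {E : Set S} {m : S} :
    IsLUB (pcl S (lowerClosure E)) m ↔ IsLUB E m :=
  isLUB_congr (by rw [upperBounds_pcl, upperBounds_lowerClosure])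

end Closure

theorem stmt16_general {S T : Type*} [Semigroup S] [PartialOrder S]
    [Semigroup T] [PartialOrder T]
    (mqT : MarkedQuantale T)
    (f : S → T)
    (hcp : ∀ M : Set S, f '' pcl S ↑(lowerClosure M) ⊆ pcl T ↑(lowerClosure (f '' M)))
    (D : Set S) (hadm : f '' D ∈ mqT.mark) :
    ∃ m : T, IsLUB (f '' pcl S ↑(lowerClosure D)) m ∧
      IsLUB (pcl T ↑(lowerClosure (f '' D))) m := by
  obtain ⟨m, hm⟩ := mqT.exists_lub _ hadm
  have hcl : IsLUB (pcl T (lowerClosure (f '' D))) m := isLUB_pcl_lowerClosure_iff.2 hm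
  have hsub : f '' D ⊆ f '' pcl S (lowerClosure D) := Set.image_mono (subset_pcl_lowerClosure D)
  exact ⟨m, hm.of_subset_of_superset hcl hsub (hcp D), hcl⟩

/-- If `f` is a closure-preserving posemigroup morphism between marked quantales and
`f(D)` is admissible in `T`, then `⋁ f((D↓)̄) = ⋁ ((f(D)↓)̄)` (both joins exist
and coincide). -/
theorem stmt16 {S T : Type*} [Semigroup S] [PartialOrder S]
    [CovariantClass S S (· * ·) (· ≤ ·)]
    [CovariantClass S S (Function.swap (· * ·)) (· ≤ ·)]
    [Semigroup T] [PartialOrder T]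
    [CovariantClass T T (· * ·) (· ≤ ·)]
    [CovariantClass T T (Function.swap (· * ·)) (· ≤ ·)]
    (mqS : MarkedQuantale S) (mqT : MarkedQuantale T)
    (f : S → T) (hmono : Monotone f) (hmul : ∀ a b : S, f (a * b) = f a * f b)
    (hcp : ∀ M : Set S, f '' pcl S ↑(lowerClosure M) ⊆ pcl T ↑(lowerClosure (f '' M)))
    (D : Set S) (hadm : f '' D ∈ mqT.mark) :
    ∃ m : T, IsLUB (f '' pcl S ↑(lowerClosure D)) m ∧
      IsLUB (pcl T ↑(lowerClosure (f '' D))) m :=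
  stmt16_general mqT f hcp D hadm
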